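/- arXiv:2303.06609 — 7 statements merged into one kernel-verified Lean document; each statement's English description precedes it below -/
import Mathlib

section
/- Let G be a tree on at least 5 vertices. A vertex v is a leaf of G if and only if there exists a vertex w ≠ v that dominates v (every connected triple containing v also contains w), and v does not dominate any vertex u ≠ v. -/
/-!
A connected triple through `u` contains a neighbour of `u`, so a leaf is dominated by its only
neighbour, and `v` dominates `u` as soon as every neighbour of `u` is `v`. Deleting a leaf `v`
leaves a connected graph on at least four vertices, in which every vertex `u` lies on a path with
three vertices; that path avoids `v`, so `v` dominates nothing.

Conversely, let `v` have two distinct neighbours `a`, `b` and let `w ≠ v` dominate `v`. The path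
`a - v - b` puts `w` among `a`, `b`, say `w = a`. Then `b` is a leaf: a path `v - b - x` with
`x ≠ v` contains `v`, hence `w`, so `x = w` and `v w b` is a triangle. Thus `v` dominates `b`.
-/

open SimpleGraph

/-- `w` dominates `u`: every connected triple containing `u` also contains `w`. -/
def Dominates {V : Type*} (G : SimpleGraph V) (w u : V) : Prop :=
  ∀ S : Finset V, S.card = 3 → (G.induce (S : Set V)).Connected → u ∈ S → w ∈ S

open Finset

namespace SimpleGraph

variable {V : Type*} {G : SimpleGraph V}

lemma Preconnected.exists_adj_mem_notMem (hG : G.Preconnected) {s : Set V} {u t : V}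
    (hu : u ∈ s) (ht : t ∉ s) : ∃ a ∈ s, ∃ b ∉ s, G.Adj a b := by
  obtain ⟨p⟩ := hG u t
  obtain ⟨d, -, hd₁, hd₂⟩ := p.exists_boundary_dart s hu ht
  exact ⟨d.fst, hd₁, d.snd, hd₂, d.adj⟩

lemma Connected.exists_adj_adj_mem [Fintype V] [DecidableEq V] (hG : G.Connected)
    (hcard : 3 ≤ Fintype.card V) (u : V) :
    ∃ x y z, G.Adj x y ∧ G.Adj y z ∧ x ≠ z ∧ u ∈ ({x, y, z} : Finset V) := by
  have : Nontrivial V := Fintype.one_lt_card_iff_nontrivial.mp (by omega)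
  obtain ⟨x, hux⟩ := hG.preconnected.exists_adj_of_nontrivial u
  obtain ⟨t, -, ht⟩ := exists_mem_notMem_of_card_lt_card (s := {u, x}) (t := univ)
    (card_le_two.trans_lt (by rw [card_univ]; omega))
  obtain ⟨a, ha, b, hb, hab⟩ :=
    hG.preconnected.exists_adj_mem_notMem (s := {u, x}) (u := u) (by simp) (by simpa using ht)
  simp only [Set.mem_insert_iff, Set.mem_singleton_iff, not_or] at ha hb
  rcases ha with rfl | rfl
  · exact ⟨b, a, x, hab.symm, hux, hb.2, by simp⟩
  · exact ⟨u, a, b, hux, hab, Ne.symm hb.1, by simp⟩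

lemma induce_triple_connected_of_adj {x y z : V} (hxy : G.Adj x y) (hyz : G.Adj y z) :
    (G.induce ({x, y, z} : Set V)).Connected := by
  have hunion : ({x, y, z} : Set V) = {x, y} ∪ {y, z} := by
    ext
    simp only [Set.mem_insert_iff, Set.mem_singleton_iff, Set.mem_union]
    tauto
  rw [hunion]
  exact induce_union_connected (induce_pair_connected_of_adj hxy).preconnected
    (induce_pair_connected_of_adj hyz).preconnected ⟨y, by simp⟩

end SimpleGraph

section Domination

variable {V : Type*} {G : SimpleGraph V}

lemma Dominates.mem_of_adj_of_adj [DecidableEq V] {w u x y z : V} (h : Dominates G w u)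
    (hxy : G.Adj x y) (hyz : G.Adj y z) (hxz : x ≠ z) (hu : u ∈ ({x, y, z} : Finset V)) :
    w ∈ ({x, y, z} : Finset V) :=
  h _ (card_eq_three.mpr ⟨x, y, z, hxy.ne, hxz, hyz.ne, rfl⟩)
    (by rw [coe_insert, coe_pair]; exact induce_triple_connected_of_adj hxy hyz) hu

lemma dominates_of_forall_adj_eq {w u : V} (h : ∀ x, G.Adj u x → x = w) : Dominates G w u := by
  intro S hS hconn hu
  obtain ⟨x, hx, hxu⟩ := S.exists_mem_ne (by omega) u
  obtain ⟨p⟩ := hconn.preconnected ⟨u, hu⟩ ⟨x, hx⟩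
  have hadj := p.adj_snd (p.not_nil_of_ne fun h ↦ hxu (congrArg Subtype.val h).symm)
  exact h _ hadj ▸ p.snd.2

lemma not_dominates_of_degree_eq_one [Fintype V] [DecidableRel G.Adj] (hG : G.Connected)
    (hcard : 4 ≤ Fintype.card V) {v u : V} (hv : G.degree v = 1) (hu : u ≠ v) :
    ¬ Dominates G v u := by
  classical
  intro h
  have hcard' : 3 ≤ Fintype.card ↥({v}ᶜ : Set V) := by
    rw [Fintype.card_compl_set]; simp only [Fintype.card_unique]; omega
  obtain ⟨x, y, z, hxy, hyz, hxz, hux⟩ :=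
    (hG.induce_compl_singleton_of_degree_eq_one hv).exists_adj_adj_mem hcard' ⟨u, hu⟩
  have hvx := h.mem_of_adj_of_adj hxy hyz (Subtype.coe_ne_coe.mpr hxz)
    (by simpa [Subtype.ext_iff] using hux)
  simp only [mem_insert, mem_singleton] at hvx
  rcases hvx with hvx | hvx | hvx
  exacts [x.2 hvx.symm, y.2 hvx.symm, z.2 hvx.symm]

lemma SimpleGraph.IsAcyclic.dominates_of_dominates_of_adj (hG : G.IsAcyclic) {v w b : V}
    (hw : Dominates G w v) (hvw : G.Adj v w) (hvb : G.Adj v b) (hwb : w ≠ b) :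
    Dominates G v b := by
  classical
  refine dominates_of_forall_adj_eq fun x hbx ↦ ?_
  by_contra hxv
  have hwx := hw.mem_of_adj_of_adj hvb hbx (Ne.symm hxv) (by simp)
  simp only [mem_insert, mem_singleton] at hwx
  rcases hwx with rfl | rfl | rfl
  · exact hvw.ne rfl
  · exact hwb rfl
  · exact hG.cliqueFree le_rfl {v, w, b} (is3Clique_triple_iff.mpr ⟨hvw, hvb, hbx.symm⟩)

lemma SimpleGraph.IsTree.degree_eq_one_of_dominates [Fintype V] [DecidableRel G.Adj] [Nontrivial V]
    (hT : G.IsTree) {v w : V} (hw : Dominates G w v) (hwv : w ≠ v)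
    (hv : ∀ u, u ≠ v → ¬ Dominates G v u) : G.degree v = 1 := by
  classical
  by_contra hdeg
  have hpos : 0 < G.degree v :=
    (G.degree_pos_iff_exists_adj v).mpr (hT.connected.preconnected.exists_adj_of_nontrivial v)
  obtain ⟨a, ha, b, hb, hab⟩ := one_lt_card.mp (show 1 < (G.neighborFinset v).card by
    rw [card_neighborFinset_eq_degree]; omega)
  rw [mem_neighborFinset] at ha hb
  have hwab := hw.mem_of_adj_of_adj ha.symm hb hab (by simp)
  simp only [mem_insert, mem_singleton] at hwab
  rcases hwab with rfl | rfl | rfl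
  · exact hv b hb.ne' (hT.isAcyclic.dominates_of_dominates_of_adj hw ha hb hab)
  · exact hwv rfl
  · exact hv a ha.ne' (hT.isAcyclic.dominates_of_dominates_of_adj hw hb ha (Ne.symm hab))

end Domination

theorem stmt4 {V : Type*} [Fintype V] (G : SimpleGraph V) [DecidableRel G.Adj]
    (hT : G.IsTree) (hcard : 5 ≤ Fintype.card V) (v : V) :
    G.degree v = 1 ↔
      (∃ w, w ≠ v ∧ Dominates G w v) ∧ (∀ u, u ≠ v → ¬ Dominates G v u) := by
  constructor
  · intro hv
    obtain ⟨w, hvw, hw⟩ := degree_eq_one_iff_existsUnique_adj.mp hv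
    exact ⟨⟨w, hvw.ne', dominates_of_forall_adj_eq hw⟩,
      fun u hu ↦ not_dominates_of_degree_eq_one hT.connected (by omega) hv hu⟩
  · rintro ⟨⟨w, hwv, hw⟩, hv⟩
    have : Nontrivial V := Fintype.one_lt_card_iff_nontrivial.mp (by omega)
    exact hT.degree_eq_one_of_dominates hw hwv hv
end

section
/- Two distinct labelled trees on the same vertex set of size at least 5 cannot have the same collection of connected triples. Equivalently: if T1 and T2 are trees on a common vertex set V with |V| ≥ 5, and for every 3-element subset S of V, T1[S] is connected if and only if T2[S] is connected, then T1 = T2. -/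
open SimpleGraph

section Aux

variable {V : Type*}

private def Tri (G : SimpleGraph V) (a b c : V) : Prop :=
  (G.Adj a b ∧ G.Adj b c) ∨ (G.Adj a b ∧ G.Adj a c) ∨ (G.Adj b c ∧ G.Adj a c)

private lemma unique_common {G : SimpleGraph V} (hG : G.IsAcyclic) {u v w x : V} (huv : u ≠ v)
    (h1 : G.Adj u w) (h2 : G.Adj w v) (h3 : G.Adj u x) (h4 : G.Adj x v) : w = x := by
  have hp1 : (Walk.cons h1 (Walk.cons h2 Walk.nil)).IsPath := by
    simp [Walk.isPath_def, h1.ne, h2.ne, huv]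
  have hp2 : (Walk.cons h3 (Walk.cons h4 Walk.nil)).IsPath := by
    simp [Walk.isPath_def, h3.ne, h4.ne, huv]
  have := hG.path_unique ⟨_, hp1⟩ ⟨_, hp2⟩
  have hs := congrArg (fun p : G.Path u v => p.1.support) this
  simpa using hs

private lemma no_triangle {G : SimpleGraph V} (hG : G.IsAcyclic) {u v w : V}
    (h1 : G.Adj u v) (h2 : G.Adj u w) (h3 : G.Adj w v) : False := by
  have hp2 : (Walk.cons h2 (Walk.cons h3 Walk.nil)).IsPath := by
    simp [Walk.isPath_def, h2.ne, h3.ne, h1.ne]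
  have := hG.path_unique (Path.singleton h1) ⟨_, hp2⟩
  have hs := congrArg (fun p : G.Path u v => p.1.length) this
  simp [Path.singleton] at hs

private lemma cross_aux {G : SimpleGraph V} {K : Set V} :
    ∀ {a b : V}, G.Walk a b → a ∈ K → b ∉ K → ∃ p q, p ∈ K ∧ q ∉ K ∧ G.Adj p q := by
  intro a b w
  induction w with
  | nil => intro h h'; exact absurd h h'
  | @cons a c b hac p ih =>
    intro ha hb
    by_cases hc : c ∈ K
    · exact ih hc hb
    · exact ⟨a, c, ha, hc, hac⟩

private lemma cross {G : SimpleGraph V} (hG : G.Connected) {K : Set V} {a b : V}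
    (ha : a ∈ K) (hb : b ∉ K) : ∃ p q, p ∈ K ∧ q ∉ K ∧ G.Adj p q := by
  obtain ⟨w⟩ := hG.preconnected a b
  exact cross_aux w ha hb

private lemma not_conn {G : SimpleGraph V} {s : Set V} {z y : V} (hz : z ∈ s) (hy : y ∈ s)
    (hne : z ≠ y) (hiso : ∀ w ∈ s, ¬ G.Adj z w) : ¬ (G.induce s).Connected := by
  intro h
  obtain ⟨w⟩ := h.preconnected ⟨z, hz⟩ ⟨y, hy⟩
  have key : ∀ (x y : ↥s) (w : (G.induce s).Walk x y), (x : V) = z → (x : V) = (y : V) := by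
    intro x y w
    induction w with
    | nil => intro _; rfl
    | @cons a c b hac p ih =>
      intro hxz
      exfalso
      have : G.Adj (a : V) (c : V) := hac
      rw [hxz] at this
      exact hiso c c.2 this
  exact hne (key _ _ w rfl)

private lemma conn_of_center {G : SimpleGraph V} {s : Set V} {z : V} (hz : z ∈ s)
    (hcen : ∀ w ∈ s, w ≠ z → G.Adj z w) : (G.induce s).Connected := by
  haveI : Nonempty ↥s := ⟨⟨z, hz⟩⟩
  refine Connected.mk ?_
  intro x y
  have hzr : ∀ x : ↥s, (G.induce s).Reachable ⟨z, hz⟩ x := by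
    intro x
    by_cases h : (x : V) = z
    · have : x = ⟨z, hz⟩ := Subtype.ext h
      rw [this]
    · have : (G.induce s).Adj ⟨z, hz⟩ x := hcen x x.2 h
      exact this.reachable
  exact (hzr x).symm.trans (hzr y)

private lemma connected_iff_tri {G : SimpleGraph V} {a b c : V} (hab : a ≠ b) (hac : a ≠ c)
    (hbc : b ≠ c) : (G.induce ({a,b,c} : Set V)).Connected ↔ Tri G a b c := by
  constructor
  · intro h
    by_contra hn
    simp only [Tri, not_or, not_and_or] at hn
    obtain ⟨h1, h2, h3⟩ := hn
    by_cases dab : G.Adj a b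
    · have hbc' : ¬ G.Adj b c := h1.resolve_left (by simpa using dab)
      have hac' : ¬ G.Adj a c := h2.resolve_left (by simpa using dab)
      refine not_conn (s := ({a,b,c} : Set V)) (by simp) (by simp) hac.symm ?_ h
      intro w hw
      simp only [Set.mem_insert_iff, Set.mem_singleton_iff] at hw
      rcases hw with rfl | rfl | rfl
      · exact fun hh => hac' hh.symm
      · exact fun hh => hbc' hh.symm
      · exact G.irrefl
    · by_cases dbc : G.Adj b c
      · have hac' : ¬ G.Adj a c := h3.resolve_left (by simpa using dbc)
        refine not_conn (s := ({a,b,c} : Set V)) (by simp) (by simp [Set.mem_insert_iff]) hab ?_ h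
        intro w hw
        simp only [Set.mem_insert_iff, Set.mem_singleton_iff] at hw
        rcases hw with rfl | rfl | rfl
        · exact G.irrefl
        · exact dab
        · exact hac'
      · refine not_conn (s := ({a,b,c} : Set V)) (show b ∈ ({a,b,c} : Set V) by simp)
          (show a ∈ ({a,b,c} : Set V) by simp) hab.symm ?_ h
        intro w hw
        simp only [Set.mem_insert_iff, Set.mem_singleton_iff] at hw
        rcases hw with rfl | rfl | rfl
        · exact fun hh => dab hh.symm
        · exact G.irrefl
        · exact dbc
  · intro ht
    rcases ht with ⟨x1, x2⟩ | ⟨x1, x2⟩ | ⟨x1, x2⟩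
    · refine conn_of_center (s := ({a,b,c} : Set V)) (z := b) (by simp) ?_
      intro w hw hwb
      simp only [Set.mem_insert_iff, Set.mem_singleton_iff] at hw
      rcases hw with rfl | rfl | rfl
      · exact x1.symm
      · exact absurd rfl hwb
      · exact x2
    · refine conn_of_center (s := ({a,b,c} : Set V)) (z := a) (by simp) ?_
      intro w hw hwa
      simp only [Set.mem_insert_iff, Set.mem_singleton_iff] at hw
      rcases hw with rfl | rfl | rfl
      · exact absurd rfl hwa
      · exact x1
      · exact x2
    · refine conn_of_center (s := ({a,b,c} : Set V)) (z := c) (by simp) ?_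
      intro w hw hwc
      simp only [Set.mem_insert_iff, Set.mem_singleton_iff] at hw
      rcases hw with rfl | rfl | rfl
      · exact x2.symm
      · exact x1.symm
      · exact absurd rfl hwc

variable [Fintype V]

private lemma exists_notmem (s : Finset V) (h : s.card < Fintype.card V) : ∃ x, x ∉ s := by
  by_contra hn
  push_neg at hn
  have : s = Finset.univ := Finset.eq_univ_iff_forall.mpr hn
  rw [this, Finset.card_univ] at h
  exact lt_irrefl _ h

private lemma step {T1 T2 : SimpleGraph V} (h1 : T1.IsTree) (hac2 : T2.IsAcyclic)
    (hcard : 3 ≤ Fintype.card V)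
    (hC : ∀ a b c : V, a ≠ b → a ≠ c → b ≠ c → (Tri T1 a b c ↔ Tri T2 a b c))
    {u v : V} (huv1 : T1.Adj u v) (huv2 : ¬ T2.Adj u v) :
    ∃ m, m ≠ u ∧ m ≠ v ∧ T2.Adj u m ∧ T2.Adj m v ∧
      ∀ w, w ≠ u → w ≠ v → (T1.Adj u w ∨ T1.Adj v w) → T2.Adj u w ∧ T2.Adj w v := by
  classical
  have huv : u ≠ v := huv1.ne
  have common : ∀ w, w ≠ u → w ≠ v → (T1.Adj u w ∨ T1.Adj v w) →
      T2.Adj u w ∧ T2.Adj w v := by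
    intro w hwu hwv hadj
    have tri1 : Tri T1 u v w := by
      rcases hadj with h | h
      · exact Or.inr (Or.inl ⟨huv1, h⟩)
      · exact Or.inl ⟨huv1, h⟩
    have tri2 := (hC u v w huv (Ne.symm hwu) (Ne.symm hwv)).mp tri1
    rcases tri2 with ⟨hh, _⟩ | ⟨hh, _⟩ | ⟨hh1, hh2⟩
    · exact absurd hh huv2
    · exact absurd hh huv2
    · exact ⟨hh2, hh1.symm⟩
  obtain ⟨x, hx⟩ := exists_notmem {u, v} (lt_of_lt_of_le (by
    calc ({u, v} : Finset V).card ≤ 2 := Finset.card_insert_le _ _ |>.trans (by simp)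
    _ < 3 := by norm_num) hcard)
  simp only [Finset.mem_insert, Finset.mem_singleton, not_or] at hx
  obtain ⟨p, q, hp, hq, hpq⟩ := cross h1.isConnected (K := ({u, v} : Set V))
    (a := u) (b := x) (by simp) (by simp [hx.1, hx.2])
  simp only [Set.mem_insert_iff, Set.mem_singleton_iff, not_or] at hp hq
  have hadj : T1.Adj u q ∨ T1.Adj v q := by
    rcases hp with rfl | rfl
    · exact Or.inl hpq
    · exact Or.inr hpq
  obtain ⟨hq1, hq2⟩ := common q hq.1 hq.2 hadj
  exact ⟨q, hq.1, hq.2, hq1, hq2, common⟩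

private lemma no_extra_aux {T1 T2 : SimpleGraph V} (h1 : T1.IsTree) (h2 : T2.IsTree)
    (hcard : 5 ≤ Fintype.card V)
    (hC : ∀ a b c : V, a ≠ b → a ≠ c → b ≠ c → (Tri T1 a b c ↔ Tri T2 a b c))
    {u v m : V} (huv1 : T1.Adj u v) (huv2 : ¬ T2.Adj u v)
    (hum2 : T2.Adj u m) (hmv2 : T2.Adj m v)
    (huni : ∀ w, w ≠ u → w ≠ v → (T1.Adj u w ∨ T1.Adj v w) → T2.Adj u w ∧ T2.Adj w v)
    (hvm1 : T1.Adj v m) (hum1 : ¬ T1.Adj u m) : False := by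
  classical
  have hC' : ∀ a b c : V, a ≠ b → a ≠ c → b ≠ c → (Tri T2 a b c ↔ Tri T1 a b c) :=
    fun a b c x y z => (hC a b c x y z).symm
  have huv : u ≠ v := huv1.ne
  have hum : u ≠ m := hum2.ne
  have hvm : v ≠ m := (hmv2.ne).symm
  -- unique common T2-neighbor of u and v is m
  have huniq : ∀ w, w ≠ u → w ≠ v → (T1.Adj u w ∨ T1.Adj v w) → w = m := by
    intro w hwu hwv hadj
    obtain ⟨c1, c2⟩ := huni w hwu hwv hadj
    exact unique_common h2.IsAcyclic huv c1 c2 hum2 hmv2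
  have N1u : ∀ w, T1.Adj u w → w = v := by
    intro w hw
    by_contra hne
    exact hum1 ((huniq w hw.ne' hne (Or.inl hw)) ▸ hw)
  have N1v : ∀ w, T1.Adj v w → w = u ∨ w = m := by
    intro w hw
    by_cases hwu : w = u
    · exact Or.inl hwu
    · exact Or.inr (huniq w hwu hw.ne' (Or.inr hw))
  -- apply step to the edge u-m of T2 which is absent from T1
  obtain ⟨m2, hm2u, hm2m, hum1', hm2m1, huni2⟩ :=
    step h2 h1.IsAcyclic (by omega) hC' hum2 hum1
  have N2m : ∀ w, T2.Adj m w → w = u ∨ w = v := by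
    intro w hw
    by_cases hwu : w = u
    · exact Or.inl hwu
    · obtain ⟨c1, _⟩ := huni2 w hwu hw.ne' (Or.inr hw)
      exact Or.inr (N1u w c1)
  -- find x, a T1-neighbor of m outside {u,v,m}
  obtain ⟨y, hy⟩ := exists_notmem {u, v, m} (lt_of_lt_of_le (by
    calc ({u, v, m} : Finset V).card ≤ 3 := by
          refine (Finset.card_insert_le _ _).trans ?_
          have := Finset.card_insert_le v ({m} : Finset V)
          simp at this ⊢
          omega
    _ < 5 := by norm_num) hcard)
  simp only [Finset.mem_insert, Finset.mem_singleton, not_or] at hy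
  obtain ⟨p, x, hp, hx, hpx⟩ := cross h1.isConnected (K := ({u, v, m} : Set V))
    (a := u) (b := y) (by simp) (by simp [hy.1, hy.2.1, hy.2.2])
  simp only [Set.mem_insert_iff, Set.mem_singleton_iff, not_or] at hp hx
  obtain ⟨hxu, hxv, hxm⟩ := hx
  have hmx1 : T1.Adj m x := by
    rcases hp with rfl | rfl | rfl
    · exact absurd (N1u x hpx) hxv
    · rcases N1v x hpx with rfl | rfl
      · exact absurd rfl hxu
      · exact absurd rfl hxm
    · exact hpx
  have hmx2 : ¬ T2.Adj m x := by
    intro hh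
    rcases N2m x hh with rfl | rfl
    · exact hxu rfl
    · exact hxv rfl
  -- derive T2.Adj v x
  have tri2 := (hC v m x hvm (fun hh => hxv hh.symm) (fun hh => hxm hh.symm)).mp
    (Or.inl ⟨hvm1, hmx1⟩)
  have hvx2 : T2.Adj v x := by
    rcases tri2 with ⟨_, hh⟩ | ⟨_, hh⟩ | ⟨hh, _⟩
    · exact absurd hh hmx2
    · exact hh
    · exact absurd hh hmx2
  -- apply step to the edge m-x of T1 which is absent from T2
  obtain ⟨m3, hm3m, hm3x, hmm3, hm3x2, huni3⟩ :=
    step h1 h2.IsAcyclic (by omega) hC hmx1 hmx2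
  have N1mx : ∀ w, w ≠ m → w ≠ x → (T1.Adj m w ∨ T1.Adj x w) → w = v := by
    intro w hwm hwx hadj
    obtain ⟨c1, c2⟩ := huni3 w hwm hwx hadj
    exact unique_common h2.IsAcyclic hmx1.ne c1 c2 hmv2 hvx2
  -- final contradiction: no edge can leave {u, v, m, x}
  obtain ⟨y2, hy2⟩ := exists_notmem {u, v, m, x} (lt_of_lt_of_le (by
    calc ({u, v, m, x} : Finset V).card ≤ 4 := by
          refine (Finset.card_insert_le _ _).trans ?_
          have h3 : ({v, m, x} : Finset V).card ≤ 3 := by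
            refine (Finset.card_insert_le _ _).trans ?_
            have := Finset.card_insert_le m ({x} : Finset V)
            simp at this ⊢
            omega
          omega
    _ < 5 := by norm_num) hcard)
  simp only [Finset.mem_insert, Finset.mem_singleton, not_or] at hy2
  obtain ⟨p, q, hp, hq, hpq⟩ := cross h1.isConnected (K := ({u, v, m, x} : Set V))
    (a := u) (b := y2) (by simp) (by simp [hy2.1, hy2.2.1, hy2.2.2.1, hy2.2.2.2])
  simp only [Set.mem_insert_iff, Set.mem_singleton_iff, not_or] at hp hq
  obtain ⟨hqu, hqv, hqm, hqx⟩ := hq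
  rcases hp with rfl | rfl | rfl | rfl
  · exact hqv (N1u q hpq)
  · rcases N1v q hpq with rfl | rfl
    · exact hqu rfl
    · exact hqm rfl
  · exact hqv (N1mx q hqm hqx (Or.inl hpq))
  · exact hqv (N1mx q hqm hqx (Or.inr hpq))

private lemma no_extra {T1 T2 : SimpleGraph V} (h1 : T1.IsTree) (h2 : T2.IsTree)
    (hcard : 5 ≤ Fintype.card V)
    (hC : ∀ a b c : V, a ≠ b → a ≠ c → b ≠ c → (Tri T1 a b c ↔ Tri T2 a b c))
    {u v : V} (huv1 : T1.Adj u v) (huv2 : ¬ T2.Adj u v) : False := by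
  obtain ⟨m, hmu, hmv, hum2, hmv2, huni⟩ := step h1 h2.IsAcyclic (by omega) hC huv1 huv2
  have tri1 : Tri T1 u v m :=
    (hC u v m huv1.ne (Ne.symm hmu) (Ne.symm hmv)).mpr (Or.inr (Or.inr ⟨hmv2.symm, hum2⟩))
  have hC' : ∀ a b c : V, a ≠ b → a ≠ c → b ≠ c → (Tri T1 a b c ↔ Tri T2 a b c) := hC
  have swap : T1.Adj u m → T1.Adj v m → False := fun hh1 hh2 =>
    no_triangle h1.IsAcyclic huv1 hh1 hh2.symm
  have caseA : T1.Adj v m → ¬ T1.Adj u m → False := fun hvm1 hum1 =>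
    no_extra_aux h1 h2 hcard hC huv1 huv2 hum2 hmv2 huni hvm1 hum1
  have caseB : T1.Adj u m → ¬ T1.Adj v m → False := by
    intro hum1 hvm1
    refine no_extra_aux h1 h2 hcard hC huv1.symm (fun hh => huv2 hh.symm)
      hmv2.symm hum2.symm ?_ hum1 hvm1
    intro w hwv hwu hadj
    obtain ⟨c1, c2⟩ := huni w hwu hwv hadj.symm
    exact ⟨c2.symm, c1.symm⟩
  rcases tri1 with ⟨_, hvm⟩ | ⟨_, hum⟩ | ⟨hvm, hum⟩
  · by_cases hum : T1.Adj u m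
    · exact swap hum hvm
    · exact caseA hvm hum
  · by_cases hvm : T1.Adj v m
    · exact swap hum hvm
    · exact caseB hum hvm
  · exact swap hum hvm

end Aux

theorem stmt6 {V : Type*} [Fintype V] (T1 T2 : SimpleGraph V)
    (h1 : T1.IsTree) (h2 : T2.IsTree) (hcard : 5 ≤ Fintype.card V)
    (h : ∀ S : Finset V, S.card = 3 →
      ((T1.induce (S : Set V)).Connected ↔ (T2.induce (S : Set V)).Connected)) :
    T1 = T2 := by
  classical
  have hC : ∀ a b c : V, a ≠ b → a ≠ c → b ≠ c → (Tri T1 a b c ↔ Tri T2 a b c) := by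
    intro a b c hab hac hbc
    have hcard3 : ({a, b, c} : Finset V).card = 3 := by
      rw [Finset.card_insert_of_notMem (by simp [hab, hac]),
          Finset.card_insert_of_notMem (by simp [hbc]), Finset.card_singleton]
    have hS := h {a, b, c} hcard3
    have hco : ((({a, b, c} : Finset V)) : Set V) = ({a, b, c} : Set V) := by simp
    rw [hco] at hS
    rw [← connected_iff_tri hab hac hbc, ← connected_iff_tri hab hac hbc]
    exact hS
  ext u v
  constructor
  · intro hadj
    by_contra hn
    exact no_extra h1 h2 hcard hC hadj hn
  · intro hadj
    by_contra hn
    exact no_extra h2 h1 hcard (fun a b c x y z => (hC a b c x y z).symm) hadj hn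
end

section
/- Let G be a 2-connected outerplanar graph on at least 5 vertices and let C be a 4-cycle in G. If a and b are two vertices of C each having no neighbours outside V(C), then a and b are consecutive on C (i.e., adjacent in C). -/
open SimpleGraph

/-- `H` is a minor of `G`: there is a family of nonempty, pairwise disjoint, connected
branch sets in `G`, one for each vertex of `H`, with edges of `H` realised by edges of `G`. -/
def IsMinor {W V : Type*} (H : SimpleGraph W) (G : SimpleGraph V) : Prop :=
  ∃ f : W → Set V,
    (∀ w, (f w).Nonempty) ∧
    (∀ w, (G.induce (f w)).Connected) ∧
    (∀ w w', w ≠ w' → Disjoint (f w) (f w')) ∧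
    (∀ w w', H.Adj w w' → ∃ a ∈ f w, ∃ b ∈ f w', G.Adj a b)

/-- A graph is outerplanar iff it has neither a `K₄` nor a `K_{2,3}` minor. -/
def Outerplanar {V : Type*} (G : SimpleGraph V) : Prop :=
  ¬ IsMinor (completeGraph (Fin 4)) G ∧
  ¬ IsMinor (completeBipartiteGraph (Fin 2) (Fin 3)) G

/-- A graph is 2-connected: more than two vertices and removing any vertex leaves
a connected graph. -/
def TwoConnected {V : Type*} [Fintype V] (G : SimpleGraph V) : Prop :=
  2 < Fintype.card V ∧ ∀ v : V, (G.induce {u | u ≠ v}).Connected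

lemma connected_induce_singleton {V : Type*} (G : SimpleGraph V) (x : V) :
    (G.induce {x}).Connected := by
  have : Nonempty ({x} : Set V) := ⟨⟨x, rfl⟩⟩
  refine ⟨fun a b => ?_⟩
  have hab : a = b := Subtype.ext (a.2.trans b.2.symm)
  exact hab ▸ Reachable.refl _

lemma key_lemma {V : Type*} [Fintype V] (G : SimpleGraph V)
    (h2 : TwoConnected G) (hop : Outerplanar G) (hcard : 5 ≤ Fintype.card V)
    (c : Fin 4 → V) (hinj : Function.Injective c)
    (hcyc : ∀ i : Fin 4, G.Adj (c i) (c (i + 1)))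
    (hNa : ∀ x, G.Adj (c 0) x → x ∈ Set.range c)
    (hNb : ∀ x, G.Adj (c 2) x → x ∈ Set.range c) : False := by
  -- a vertex outside the cycle
  obtain ⟨v, hv⟩ : ∃ v, v ∉ Set.range c := by
    by_contra h
    push_neg at h
    have hsurj : Function.Surjective c := fun x => h x
    have := Fintype.card_le_of_surjective c hsurj
    simp at this
    omega
  -- the component of v outside the cycle
  set step : V → V → Prop :=
    fun x y => G.Adj x y ∧ x ∉ Set.range c ∧ y ∉ Set.range c with hstep
  set D : Set V := {u | Relation.ReflTransGen step v u} with hD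
  have hvD : v ∈ D := Relation.ReflTransGen.refl
  have hDS : ∀ u ∈ D, u ∉ Set.range c := by
    intro u hu
    induction hu with
    | refl => exact hv
    | tail _ h _ => exact h.2.2
  -- D is connected
  have hconn : (G.induce D).Connected := by
    have : Nonempty D := ⟨⟨v, hvD⟩⟩
    refine ⟨fun x y => ?_⟩
    suffices H : ∀ u (hu : u ∈ D), (G.induce D).Reachable ⟨v, hvD⟩ ⟨u, hu⟩ by
      exact (H x.1 x.2).symm.trans (H y.1 y.2)
    intro u hu
    induction hu with
    | refl => exact Reachable.refl _
    | @tail b c' hb hbc ih =>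
        exact Reachable.trans ih
          (SimpleGraph.Adj.reachable
            (show (G.induce D).Adj ⟨b, hb⟩ ⟨c', hb.tail hbc⟩ from hbc.1))
  -- D attaches to both c 1 and c 3
  have attach : ∀ j k : Fin 4, j ≠ 0 → j ≠ 2 → k ≠ 0 →
      (∀ m : Fin 4, m = 0 ∨ m = 2 ∨ m = j ∨ m = k) → ∃ d ∈ D, G.Adj (c j) d := by
    intro j k hj0 hj2 hk0 hall
    by_contra hno
    push_neg at hno
    have hvk : v ≠ c k := fun h => hv ⟨k, h.symm⟩
    have h0k : c 0 ≠ c k := fun h => hk0 (hinj h).symm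
    have hcon := (h2.2 (c k)).preconnected
      (⟨v, hvk⟩ : {u | u ≠ c k}) ⟨c 0, h0k⟩
    rw [reachable_iff_reflTransGen] at hcon
    have main : ∀ x : {u | u ≠ c k},
        Relation.ReflTransGen (G.induce {u | u ≠ c k}).Adj ⟨v, hvk⟩ x → x.1 ∈ D := by
      intro x hx
      induction hx with
      | refl => exact hvD
      | @tail y z hy hyz ih =>
          have hyD : y.1 ∈ D := ih
          have hadj : G.Adj y.1 z.1 := hyz
          by_cases hz : z.1 ∈ Set.range c
          · obtain ⟨m, hm⟩ := hz
            have hadj2 : G.Adj (c m) y.1 := by rw [hm]; exact hadj.symm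
            rcases hall m with rfl | rfl | rfl | rfl
            · exact absurd (hNa y.1 hadj2) (hDS y.1 hyD)
            · exact absurd (hNb y.1 hadj2) (hDS y.1 hyD)
            · exact absurd hadj2 (hno y.1 hyD)
            · exact absurd hm.symm z.2
          · exact hyD.tail ⟨hadj, hDS y.1 hyD, hz⟩
    exact absurd (main _ hcon) (by exact fun h => (hDS _ h) ⟨0, rfl⟩)
  obtain ⟨d1, hd1D, hd1⟩ := attach 1 3 (by decide) (by decide) (by decide) (by decide)
  obtain ⟨d3, hd3D, hd3⟩ := attach 3 1 (by decide) (by decide) (by decide) (by decide)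
  -- build the K_{2,3} minor
  apply hop.2
  refine ⟨Sum.elim ![{c 1}, {c 3}] ![{c 0}, {c 2}, D], ?_, ?_, ?_, ?_⟩
  · rintro (i | i) <;> fin_cases i <;>
      first
        | exact ⟨c 1, rfl⟩
        | exact ⟨c 3, rfl⟩
        | exact ⟨c 0, rfl⟩
        | exact ⟨c 2, rfl⟩
        | exact ⟨v, hvD⟩
  · rintro (i | i) <;> fin_cases i <;>
      first
        | exact connected_induce_singleton G _
        | exact hconn
  · have hsd : ∀ i : Fin 4, Disjoint ({c i} : Set V) D := by
      intro i
      rw [Set.disjoint_left]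
      rintro x rfl hxD
      exact hDS _ hxD ⟨i, rfl⟩
    have hss : ∀ i j : Fin 4, i ≠ j → Disjoint ({c i} : Set V) ({c j} : Set V) := by
      intro i j hij
      simp [Set.disjoint_singleton, hinj.ne hij]
    rintro (i | i) (j | j) hne <;> fin_cases i <;> fin_cases j <;>
      first
        | exact absurd rfl hne
        | exact hss _ _ (by decide)
        | exact hsd _
        | exact (hsd _).symm
  · have e01 : G.Adj (c 0) (c 1) := hcyc 0
    have e12 : G.Adj (c 1) (c 2) := hcyc 1
    have e23 : G.Adj (c 2) (c 3) := hcyc 2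
    have e30 : G.Adj (c 3) (c 0) := hcyc 3
    rintro (i | i) (j | j) hadj <;> fin_cases i <;> fin_cases j <;>
      first
        | exact ⟨c 1, rfl, c 0, rfl, e01.symm⟩
        | exact ⟨c 1, rfl, c 2, rfl, e12⟩
        | exact ⟨c 1, rfl, d1, hd1D, hd1⟩
        | exact ⟨c 3, rfl, c 0, rfl, e30⟩
        | exact ⟨c 3, rfl, c 2, rfl, e23.symm⟩
        | exact ⟨c 3, rfl, d3, hd3D, hd3⟩
        | exact ⟨c 0, rfl, c 1, rfl, e01⟩
        | exact ⟨c 2, rfl, c 1, rfl, e12.symm⟩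
        | exact ⟨d1, hd1D, c 1, rfl, hd1.symm⟩
        | exact ⟨c 0, rfl, c 3, rfl, e30.symm⟩
        | exact ⟨c 2, rfl, c 3, rfl, e23⟩
        | exact ⟨d3, hd3D, c 3, rfl, hd3.symm⟩
        | simp at hadj

theorem stmt10 {V : Type*} [Fintype V] (G : SimpleGraph V)
    (h2 : TwoConnected G) (hop : Outerplanar G) (hcard : 5 ≤ Fintype.card V)
    (c : Fin 4 → V) (hinj : Function.Injective c)
    (hcyc : ∀ i : Fin 4, G.Adj (c i) (c (i + 1)))
    (a b : V) (ha : a ∈ Set.range c) (hb : b ∈ Set.range c) (hab : a ≠ b)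
    (hNa : ∀ x, G.Adj a x → x ∈ Set.range c)
    (hNb : ∀ x, G.Adj b x → x ∈ Set.range c) :
    ∃ i : Fin 4, (a = c i ∧ b = c (i + 1)) ∨ (b = c i ∧ a = c (i + 1)) := by
  obtain ⟨i, rfl⟩ := ha
  obtain ⟨j, rfl⟩ := hb
  have hij : i ≠ j := fun h => hab (congrArg c h)
  by_contra hcon
  push_neg at hcon
  -- j = i + 2
  have key2 : ∀ x : Fin 4, x ≠ 0 → x = 1 ∨ x = 2 ∨ x = 3 := by decide
  have hdiff := key2 (j - i) (sub_ne_zero.mpr hij.symm)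
  have hji : j = i + (j - i) := by simp
  have hj2 : j = i + 2 := by
    rcases hdiff with h | h | h
    · exfalso
      have hj1 : j = i + 1 := by rw [hji, h]
      exact (hcon i).1 rfl (congrArg c hj1)
    · rw [hji, h]
    · exfalso
      have hji' : i = j + 1 := by
        rw [hji, h, add_assoc, show (3 : Fin 4) + 1 = 0 from rfl, add_zero]
      exact (hcon j).2 rfl (by rw [← hji'])
  subst hj2
  exfalso
  -- rotate the cycle
  set c' : Fin 4 → V := fun t => c (i + t) with hc'
  have hinj' : Function.Injective c' := fun s t h => add_left_cancel (hinj h)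
  have hcyc' : ∀ t : Fin 4, G.Adj (c' t) (c' (t + 1))  := by
    intro t
    have := hcyc (i + t)
    simpa [hc', add_assoc] using this
  have hr : Set.range c' = Set.range c := by
    ext x
    constructor
    · rintro ⟨t, rfl⟩; exact ⟨i + t, rfl⟩
    · rintro ⟨t, rfl⟩; exact ⟨t - i, by simp [hc']⟩
  have h0 : c' 0 = c i := by simp [hc']
  have h2' : c' 2 = c (i + 2) := rfl
  exact key_lemma G h2 hop hcard c' hinj' hcyc'
    (fun x hx => hr ▸ hNa x (h0 ▸ hx))
    (fun x hx => hr ▸ hNb x (h2' ▸ hx))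
end

section
/- Let G be a 2-connected outerplanar graph on at least 6 vertices, and let v be a vertex of G of degree 2 with neighbours w1 and w2. Then every connected triple containing v also contains w1 or w2, and there is no other vertex v' ∉ {v, w1, w2} such that every connected triple containing v' also contains w1 or w2. -/
/-!
A connected set containing `v` and some other vertex contains a neighbour of `v`, which gives the
first claim. For the second, let `T = V \ {v, w₁, w₂}`. Since `G - w₂` is connected and `v` sees
only `w₁, w₂`, every component of `G[T]` is joined to `w₁`, and likewise to `w₂`. Two components
of `G[T]` together with `{v}` would then form, with `{w₁}` and `{w₂}`, a `K_{2,3}` minor; so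
`G[T]` is connected. It has at least three vertices, so every `v' ∈ T` lies in a connected
triple inside `T`, which misses `w₁` and `w₂`.
-/

open SimpleGraph

open Function

namespace SimpleGraph

variable {V : Type*} {G : SimpleGraph V}

lemma connected_induce_singleton (x : V) : (G.induce {x}).Connected := by
  rw [induce_singleton_eq_top]
  exact connected_top

lemma connected_induce_triple_of_adj {a b c : V} (hab : G.Adj a b)
    (hc : G.Adj a c ∨ G.Adj b c) : (G.induce {a, b, c}).Connected := by
  rw [show ({a, b, c} : Set V) = {a, b} ∪ {c} by rw [Set.insert_union, Set.singleton_union]]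
  rcases hc with hac | hbc
  · exact connected_induce_union (induce_pair_connected_of_adj hab).preconnected
      (connected_induce_singleton c).preconnected (Set.mem_insert a {b}) rfl hac
  · exact connected_induce_union (induce_pair_connected_of_adj hab).preconnected
      (connected_induce_singleton c).preconnected (Set.mem_insert_of_mem a rfl) rfl hbc

lemma ConnectedComponent.connected_induce_image_val_supp {T : Set V}
    (C : (G.induce T).ConnectedComponent) : (G.induce (Subtype.val '' C.supp)).Connected := by
  refine C.connected_toSimpleGraph.map ⟨fun x => ⟨x.1.1, x.1, x.2, rfl⟩, id⟩ ?_
  rintro ⟨_, x, hx, rfl⟩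
  exact ⟨⟨x, hx⟩, rfl⟩

lemma exists_adj_of_preconnected_induce {T A : Set V} (hT : (G.induce T).Preconnected)
    {a b : V} (ha : a ∈ A ∩ T) (hb : b ∈ T \ A) : ∃ c ∈ A ∩ T, ∃ d ∈ T \ A, G.Adj c d := by
  obtain ⟨p⟩ := hT ⟨a, ha.2⟩ ⟨b, hb.1⟩
  obtain ⟨d, -, hd₁, hd₂⟩ := p.exists_boundary_dart (Subtype.val ⁻¹' A) ha.1 hb.2
  exact ⟨d.fst, ⟨hd₁, d.fst.2⟩, d.snd, ⟨d.snd.2, hd₂⟩, d.adj⟩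

lemma exists_adj_of_preconnected_induce_of_ne {T : Set V} (hT : (G.induce T).Preconnected)
    {x y : V} (hx : x ∈ T) (hy : y ∈ T) (hxy : y ≠ x) : ∃ z ∈ T, G.Adj x z := by
  obtain ⟨_, ⟨rfl, -⟩, z, ⟨hz, -⟩, hxz⟩ :=
    exists_adj_of_preconnected_induce (A := {x}) hT ⟨rfl, hx⟩ ⟨hy, hxy⟩
  exact ⟨z, hz, hxz⟩

lemma exists_connected_triple_of_preconnected_induce {T : Set V}
    (hT : (G.induce T).Preconnected) {x : V} (hx : x ∈ T) (h3 : 3 ≤ T.ncard) :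
    ∃ S : Finset V, (S : Set V) ⊆ T ∧ S.card = 3 ∧ x ∈ S ∧ (G.induce (S : Set V)).Connected := by
  classical
  have hout (a b : V) : ∃ z ∈ T, z ∉ ({a, b} : Set V) :=
    Set.exists_mem_notMem_of_ncard_lt_ncard <| by
      grw [Set.ncard_insert_le, Set.ncard_singleton]; omega
  obtain ⟨y₀, hy₀T, hy₀⟩ := hout x x
  obtain ⟨y, hyT, hxy⟩ :=
    exists_adj_of_preconnected_induce_of_ne hT hx hy₀T (by simpa using hy₀)
  obtain ⟨z₀, hz₀T, hz₀⟩ := hout x y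
  obtain ⟨c, ⟨hc, -⟩, z, ⟨hzT, hz⟩, hcz⟩ :=
    exists_adj_of_preconnected_induce hT ⟨Set.mem_insert x {y}, hx⟩ ⟨hz₀T, hz₀⟩
  simp only [Set.mem_insert_iff, Set.mem_singleton_iff, not_or] at hc hz
  refine ⟨{x, y, z}, ?_, ?_, by simp, ?_⟩
  · simp [Set.insert_subset_iff, hx, hyT, hzT]
  · rw [Finset.card_eq_three]
    exact ⟨x, y, z, hxy.ne, Ne.symm hz.1, Ne.symm hz.2, rfl⟩
  · rw [Finset.coe_insert, Finset.coe_insert, Finset.coe_singleton]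
    refine connected_induce_triple_of_adj hxy ?_
    rcases hc with rfl | rfl
    exacts [Or.inl hcz, Or.inr hcz]

theorem isMinor_completeBipartiteGraph {α β : Type*} (X : α → Set V) (Y : β → Set V)
    (hXconn : ∀ i, (G.induce (X i)).Connected) (hYconn : ∀ j, (G.induce (Y j)).Connected)
    (hXdisj : Pairwise (Disjoint on X)) (hYdisj : Pairwise (Disjoint on Y))
    (hXY : ∀ i j, Disjoint (X i) (Y j)) (hadj : ∀ i j, ∃ a ∈ X i, ∃ b ∈ Y j, G.Adj a b) :
    IsMinor (completeBipartiteGraph α β) G := by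
  refine ⟨Sum.elim X Y, ?_, ?_, ?_, ?_⟩
  · rintro (i | j)
    exacts [Set.nonempty_coe_sort.mp (hXconn i).nonempty,
      Set.nonempty_coe_sort.mp (hYconn j).nonempty]
  · rintro (i | j)
    exacts [hXconn i, hYconn j]
  · rintro (i | j) (i' | j') hne
    · exact hXdisj (ne_of_apply_ne _ hne)
    · exact hXY i j'
    · exact (hXY i' j).symm
    · exact hYdisj (ne_of_apply_ne _ hne)
  · rintro (i | j) (i' | j') hij
    · simp at hij
    · exact hadj i j'
    · obtain ⟨a, ha, b, hb, hab⟩ := hadj i' j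
      exact ⟨b, hb, a, ha, hab.symm⟩
    · simp at hij

lemma exists_adj_of_connectedComponent_induce_compl {v w₁ w₂ : V} {T : Set V}
    (hT : T = {v, w₁, w₂}ᶜ) (hw₂ : (G.induce {u | u ≠ w₂}).Preconnected) (hw : w₁ ≠ w₂)
    (hv : G.neighborSet v ⊆ {w₁, w₂}) (C : (G.induce T).ConnectedComponent) :
    ∃ x ∈ Subtype.val '' C.supp, G.Adj w₁ x := by
  subst hT
  obtain ⟨k, hk⟩ := C.nonempty_supp
  obtain ⟨_, ⟨⟨a, ha, rfl⟩, -⟩, b, ⟨hbw₂, hbC⟩, hab⟩ :=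
    exists_adj_of_preconnected_induce (A := Subtype.val '' C.supp) hw₂
      ⟨⟨k, hk, rfl⟩, fun h => k.2 (by simp [h])⟩ ⟨hw, fun ⟨x, _, hx⟩ => x.2 (by simp [hx])⟩
  refine ⟨a, ⟨a, ha, rfl⟩, ?_⟩
  by_cases hb : b ∈ ({v, w₁, w₂} : Set V)
  · rcases hb with rfl | rfl | rfl
    · exact absurd (Set.mem_insert_of_mem b (hv hab.symm)) a.2
    · exact hab.symm
    · exact absurd rfl hbw₂
  · exact absurd ⟨⟨b, hb⟩, (C.mem_supp_congr_adj (v := a) (w := ⟨b, hb⟩) hab).mp ha, rfl⟩ hbC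

theorem preconnected_induce_compl_of_neighborSet_eq {v w₁ w₂ : V}
    (hconn : ∀ w, (G.induce {u | u ≠ w}).Preconnected)
    (hK23 : ¬ IsMinor (completeBipartiteGraph (Fin 2) (Fin 3)) G) (hw : w₁ ≠ w₂)
    (hv : G.neighborSet v = {w₁, w₂}) : (G.induce ({v, w₁, w₂}ᶜ : Set V)).Preconnected := by
  set T : Set V := {v, w₁, w₂}ᶜ with hT
  intro a b
  by_contra hab
  have hadj₁ (C : (G.induce T).ConnectedComponent) : ∃ x ∈ Subtype.val '' C.supp, G.Adj w₁ x :=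
    exists_adj_of_connectedComponent_induce_compl rfl (hconn w₂) hw hv.subset C
  have hadj₂ (C : (G.induce T).ConnectedComponent) : ∃ x ∈ Subtype.val '' C.supp, G.Adj w₂ x :=
    exists_adj_of_connectedComponent_induce_compl (by rw [hT, Set.pair_comm]) (hconn w₁)
      hw.symm (hv.trans (Set.pair_comm w₁ w₂)).subset C
  have hvw₁ : G.Adj v w₁ := by simp [← mem_neighborSet, hv]
  have hvw₂ : G.Adj v w₂ := by simp [← mem_neighborSet, hv]
  have hab' : Disjoint (Subtype.val '' (G.induce T |>.connectedComponentMk a).supp)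
      (Subtype.val '' (G.induce T |>.connectedComponentMk b).supp) :=
    (Set.disjoint_image_iff Subtype.val_injective).mpr
      (pairwise_disjoint_supp_connectedComponent _ (mt ConnectedComponent.eq.mp hab))
  apply hK23
  refine isMinor_completeBipartiteGraph ![{w₁}, {w₂}]
    ![Subtype.val '' (G.induce T |>.connectedComponentMk a).supp,
      Subtype.val '' (G.induce T |>.connectedComponentMk b).supp, {v}] ?_ ?_ ?_ ?_ ?_ ?_
  · intro i
    fin_cases i <;> exact connected_induce_singleton _
  · intro j
    fin_cases j
    · exact ConnectedComponent.connected_induce_image_val_supp _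
    · exact ConnectedComponent.connected_induce_image_val_supp _
    · exact connected_induce_singleton _
  · intro i j hij
    fin_cases i <;> fin_cases j <;> simp [onFun, hw, hw.symm] at hij ⊢
  · intro i j hij
    fin_cases i <;> fin_cases j <;> simp [onFun, hab', hab'.symm, T] at hij ⊢
  · intro i j
    fin_cases i <;> fin_cases j <;> simp [T, hvw₁.ne', hvw₂.ne']
  · intro i j
    fin_cases i <;> fin_cases j <;>
      first
        | exact ⟨w₁, rfl, hadj₁ _⟩
        | exact ⟨w₂, rfl, hadj₂ _⟩
        | exact ⟨w₁, rfl, v, rfl, hvw₁.symm⟩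
        | exact ⟨w₂, rfl, v, rfl, hvw₂.symm⟩

end SimpleGraph

theorem stmt12 {V : Type*} [Fintype V] (G : SimpleGraph V)
    (h2 : TwoConnected G) (hop : Outerplanar G) (hcard : 6 ≤ Fintype.card V)
    (v w1 w2 : V) (hw : w1 ≠ w2) (hnbr : G.neighborSet v = {w1, w2}) :
    (∀ S : Finset V, S.card = 3 → (G.induce (S : Set V)).Connected → v ∈ S →
      (w1 ∈ S ∨ w2 ∈ S)) ∧
    ¬ ∃ v', v' ∉ ({v, w1, w2} : Set V) ∧
      ∀ S : Finset V, S.card = 3 → (G.induce (S : Set V)).Connected → v' ∈ S →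
        (w1 ∈ S ∨ w2 ∈ S) := by
  constructor
  · intro S hS3 hS hvS
    obtain ⟨u, huS, huv⟩ := S.exists_mem_ne (by omega) v
    obtain ⟨w, hwS, hvw⟩ := exists_adj_of_preconnected_induce_of_ne hS.preconnected hvS huS huv
    rcases (hnbr ▸ hvw : w ∈ ({w1, w2} : Set V)) with rfl | rfl
    exacts [Or.inl hwS, Or.inr hwS]
  · rintro ⟨v', hv', hall⟩
    have hT := preconnected_induce_compl_of_neighborSet_eq (fun w => (h2.2 w).preconnected)
      hop.2 hw hnbr
    have hT3 : 3 ≤ ({v, w1, w2}ᶜ : Set V).ncard := by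
      have hsum := Set.ncard_add_ncard_compl ({v, w1, w2} : Set V)
      have hle : ({v, w1, w2} : Set V).ncard ≤ 3 := by
        grw [Set.ncard_insert_le, Set.ncard_insert_le, Set.ncard_singleton]
      rw [Nat.card_eq_fintype_card] at hsum
      omega
    obtain ⟨S, hST, hS3, hv'S, hS⟩ := exists_connected_triple_of_preconnected_induce hT hv' hT3
    rcases hall S hS3 hS hv'S with h | h
    exacts [hST h (by simp), hST h (by simp)]
end

section
/- For every integer ℓ ≥ 5, the cycle C_ℓ is determined by its connected triples among graphs on the same ℓ labelled vertices: if G is a graph on vertices v_0, ..., v_{ℓ−1} whose set of connected triples is exactly {{v_i, v_{i+1}, v_{i+2}} : i mod ℓ}, then G is the cycle v_0 — v_1 — ... — v_{ℓ−1} — v_0. -/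
open SimpleGraph

/-! A set of three vertices induces a connected graph exactly when one of them is adjacent to the
other two. If the cycle edge `(i + 1, i + 2)` were missing, the connected triples `{i, i + 1, i + 2}`
and `{i + 1, i + 2, i + 3}` would make `i + 2` adjacent to both `i` and `i + 3`, so the
non-consecutive triple `{i, i + 2, i + 3}` would be connected. Conversely, a chord `ab` makes
`{a, a + 1, b}` connected, which forces `b = a + 2`; by symmetry also `a = b + 2`, so `4 = 0`. -/

section induce

variable {V : Type*} {G : SimpleGraph V} {x y z : V}

lemma SimpleGraph.connected_induce_triple_of_adj_of_adj (hy : G.Adj x y) (hz : G.Adj x z) :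
    (G.induce {x, y, z}).Connected := by
  rw [show ({x, y, z} : Set V) = {x, y} ∪ {x, z} by ext; simp; tauto]
  exact induce_union_connected (induce_pair_connected_of_adj hy).preconnected
    (induce_pair_connected_of_adj hz).preconnected ⟨x, by simp⟩

lemma SimpleGraph.adj_of_connected_induce_triple_of_not_adj (hc : (G.induce {x, y, z}).Connected)
    (hyz : y ≠ z) (hn : ¬ G.Adj y z) : G.Adj y x := by
  obtain ⟨⟨w, hw⟩, hyw⟩ := (hc.preconnected ⟨y, by simp⟩ ⟨z, by simp⟩).nonempty_neighborSet_left
    (by simpa using hyz)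
  rcases hw with rfl | rfl | rfl
  · exact hyw
  · exact absurd hyw (G.irrefl)
  · exact absurd hyw hn

end induce

lemma ne_of_sub_eq_of_ne_zero {A : Type*} [AddGroup A] {a b c : A} (h : b - a = c) (hc : c ≠ 0) :
    a ≠ b :=
  fun hab => hc (by rw [← h, hab, sub_self])

variable {R : Type*} [CommRing R]

lemma two_ne_zero_of_four_ne_zero (h4 : (4 : R) ≠ 0) : (2 : R) ≠ 0 :=
  fun h2 => h4 (by linear_combination 2 * h2)

variable [DecidableEq R]

lemma add_three_notMem_triple_of_mem_of_add_two_mem (h3 : (3 : R) ≠ 0) (h4 : (4 : R) ≠ 0)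
    {i j : R} (hi : i ∈ ({j, j + 1, j + 2} : Finset R))
    (hi2 : i + 2 ∈ ({j, j + 1, j + 2} : Finset R)) :
    i + 3 ∉ ({j, j + 1, j + 2} : Finset R) := by
  simp only [Finset.mem_insert, Finset.mem_singleton] at hi hi2 ⊢
  grind

lemma eq_add_two_or_of_mem_triple (h2 : (2 : R) ≠ 0) {a b j : R}
    (ha : a ∈ ({j, j + 1, j + 2} : Finset R)) (ha1 : a + 1 ∈ ({j, j + 1, j + 2} : Finset R))
    (hb : b ∈ ({j, j + 1, j + 2} : Finset R)) (hba : b ≠ a) (hba1 : b ≠ a + 1) :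
    b = a + 2 ∨ a = b + 1 := by
  simp only [Finset.mem_insert, Finset.mem_singleton] at ha ha1 hb
  grind

def SimpleGraph.ConnectedTriplesAreConsecutive (G : SimpleGraph R) : Prop :=
  ∀ S : Finset R, S.card = 3 →
    ((G.induce (S : Set R)).Connected ↔ ∃ i : R, S = {i, i + 1, i + 2})

namespace SimpleGraph.ConnectedTriplesAreConsecutive

variable {G : SimpleGraph R} {x y z : R}

lemma connected_induce_iff (hG : G.ConnectedTriplesAreConsecutive) (hxy : x ≠ y) (hxz : x ≠ z)
    (hyz : y ≠ z) :
    (G.induce {x, y, z}).Connected ↔ ∃ j, ({x, y, z} : Finset R) = {j, j + 1, j + 2} := by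
  have := hG {x, y, z} (Finset.card_eq_three.mpr ⟨x, y, z, hxy, hxz, hyz, rfl⟩)
  rwa [Finset.coe_insert, Finset.coe_pair] at this

lemma connected_induce_consecutive (hG : G.ConnectedTriplesAreConsecutive) (h2 : (2 : R) ≠ 0)
    (i : R) : (G.induce {i, i + 1, i + 2}).Connected := by
  have h1 : (1 : R) ≠ 0 := fun h1 => h2 (by linear_combination 2 * h1)
  exact (hG.connected_induce_iff (ne_of_sub_eq_of_ne_zero (by ring) h1)
    (ne_of_sub_eq_of_ne_zero (by ring) h2) (ne_of_sub_eq_of_ne_zero (by ring) h1)).mpr ⟨i, rfl⟩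

lemma exists_mem_triple_of_connected_induce (hG : G.ConnectedTriplesAreConsecutive) (hxy : x ≠ y)
    (hxz : x ≠ z) (hyz : y ≠ z) (hc : (G.induce {x, y, z}).Connected) :
    ∃ j, x ∈ ({j, j + 1, j + 2} : Finset R) ∧ y ∈ ({j, j + 1, j + 2} : Finset R) ∧
      z ∈ ({j, j + 1, j + 2} : Finset R) := by
  obtain ⟨j, hj⟩ := (hG.connected_induce_iff hxy hxz hyz).mp hc
  exact ⟨j, by simp [← hj]⟩

lemma adj_add_one (hG : G.ConnectedTriplesAreConsecutive) (h3 : (3 : R) ≠ 0) (h4 : (4 : R) ≠ 0)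
    (i : R) : G.Adj i (i + 1) := by
  have h2 := two_ne_zero_of_four_ne_zero h4
  have h1 : (1 : R) ≠ 0 := fun h1 => h2 (by linear_combination 2 * h1)
  suffices ∀ i : R, G.Adj (i + 1) (i + 2) by
    simpa [show i - 1 + 2 = i + 1 by ring] using this (i - 1)
  intro i
  by_contra hn
  have hne12 : i + 1 ≠ i + 2 := ne_of_sub_eq_of_ne_zero (by ring) h1
  have hne23 : i + 2 ≠ i + 3 := ne_of_sub_eq_of_ne_zero (by ring) h1
  have hc₀ : (G.induce {i, i + 2, i + 1}).Connected := by
    rw [Set.pair_comm]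
    exact hG.connected_induce_consecutive h2 i
  have hc₁ : (G.induce {i + 3, i + 2, i + 1}).Connected := by
    have := hG.connected_induce_consecutive h2 (i + 1)
    rwa [show i + 1 + 1 = i + 2 by ring, show i + 1 + 2 = i + 3 by ring, Set.pair_comm,
      Set.insert_comm, Set.pair_comm] at this
  have h20 := adj_of_connected_induce_triple_of_not_adj hc₀ hne12.symm (fun h => hn h.symm)
  have h23 := adj_of_connected_induce_triple_of_not_adj hc₁ hne12.symm (fun h => hn h.symm)
  obtain ⟨j, hj2, hj0, hj3⟩ := hG.exists_mem_triple_of_connected_induce h20.ne hne23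
    (ne_of_sub_eq_of_ne_zero (by ring) h3) (connected_induce_triple_of_adj_of_adj h20 h23)
  exact add_three_notMem_triple_of_mem_of_add_two_mem h3 h4 hj0 hj2 hj3

lemma eq_add_two_of_adj (hG : G.ConnectedTriplesAreConsecutive) (h3 : (3 : R) ≠ 0)
    (h4 : (4 : R) ≠ 0) (hxy : G.Adj x y) (hyx1 : y ≠ x + 1) (hxy1 : x ≠ y + 1) : y = x + 2 := by
  have hadj := hG.adj_add_one h3 h4 x
  obtain ⟨j, hx, hx1, hy⟩ := hG.exists_mem_triple_of_connected_induce hadj.ne hxy.ne hyx1.symm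
    (connected_induce_triple_of_adj_of_adj hadj hxy)
  exact (eq_add_two_or_of_mem_triple (two_ne_zero_of_four_ne_zero h4) hx hx1 hy hxy.ne'
    hyx1).resolve_right hxy1

theorem adj_iff (hG : G.ConnectedTriplesAreConsecutive) (h3 : (3 : R) ≠ 0) (h4 : (4 : R) ≠ 0)
    (a b : R) : G.Adj a b ↔ b = a + 1 ∨ a = b + 1 := by
  refine ⟨fun hab => ?_, ?_⟩
  · by_contra! hne
    have hb := hG.eq_add_two_of_adj h3 h4 hab hne.1 hne.2
    have ha := hG.eq_add_two_of_adj h3 h4 hab.symm hne.2 hne.1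
    exact h4 (by linear_combination -hb - ha)
  · rintro (rfl | rfl)
    exacts [hG.adj_add_one h3 h4 a, (hG.adj_add_one h3 h4 b).symm]

end SimpleGraph.ConnectedTriplesAreConsecutive

theorem stmt15 (ℓ : ℕ) (hl : 5 ≤ ℓ) (G : SimpleGraph (Fin ℓ))
    (h : ∀ S : Finset (Fin ℓ), S.card = 3 →
      ((G.induce (S : Set (Fin ℓ))).Connected ↔
        ∃ i : Fin ℓ, S = {i, i + (⟨1, by omega⟩ : Fin ℓ), i + (⟨2, by omega⟩ : Fin ℓ)})) :
    ∀ a b : Fin ℓ, G.Adj a b ↔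
      (b = a + (⟨1, by omega⟩ : Fin ℓ) ∨ a = b + (⟨1, by omega⟩ : Fin ℓ)) := by
  have : NeZero ℓ := ⟨by omega⟩
  have mk_one : (⟨1, by omega⟩ : Fin ℓ) = 1 := Fin.ext (Nat.mod_eq_of_lt (by omega)).symm
  have mk_two : (⟨2, by omega⟩ : Fin ℓ) = 2 := Fin.ext (Nat.mod_eq_of_lt (by omega)).symm
  have h3 : (3 : Fin ℓ) ≠ 0 := Fin.ne_of_val_ne (by simp [Nat.mod_eq_of_lt (show 3 < ℓ by omega)])
  have h4 : (4 : Fin ℓ) ≠ 0 := Fin.ne_of_val_ne (by simp [Nat.mod_eq_of_lt (show 4 < ℓ by omega)])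
  simp only [mk_one, mk_two] at h ⊢
  open Fin.CommRing in exact ConnectedTriplesAreConsecutive.adj_iff h h3 h4
end

section
/- Let n be even and let P be the path on vertices 1, 2, ..., n (with edges {i, i+1}). Let P' be the path obtained by swapping the labels of the vertices n/2 and n/2 + 1. Then for every k ≥ n/2 + 1, P and P' have exactly the same collections of connected k-sets (vertex subsets of size k inducing a connected subgraph). In particular, an n-vertex path is not determined by its connected k-sets for k ≥ n/2 + 1. -/
open SimpleGraph

def pathOn (n : ℕ) : SimpleGraph ℕ where
  Adj i j := (j = i + 1 ∨ i = j + 1) ∧ 1 ≤ i ∧ i ≤ n ∧ 1 ≤ j ∧ j ≤ n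
  symm := ⟨by intro i j h; exact ⟨h.1.symm, h.2.2.2.1, h.2.2.2.2, h.2.1, h.2.2.1⟩⟩
  loopless := ⟨by intro i h; omega⟩

/-!
Relabelling by `σ = swap (n/2) (n/2+1)` gives `P'[S] ≅ P[σ⁻¹ S]`, so it suffices to show that
every connected set of `P` with more than `n/2` vertices contains both `n/2` and `n/2+1`, and is
therefore fixed by `σ`. A connected set missing a vertex `c` lies entirely on one side of `c`,
hence has at most `max (c - 1) (n - c)` elements, which is `n/2` for `c ∈ {n/2, n/2+1}`.
-/

lemma SimpleGraph.map_bot {V W : Type*} (f : V ↪ W) : (⊥ : SimpleGraph V).map f = ⊥ := by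
  ext; simp [map_adj]

lemma SimpleGraph.connected_induce_map_equiv_iff {V W : Type*} (G : SimpleGraph V) (e : V ≃ W)
    (s : Set W) :
    ((G.map e.toEmbedding).induce s).Connected ↔ (G.induce (e ⁻¹' s)).Connected :=
  ((Iso.map e G).induce e.bijective.bijOn_preimage).connected_iff.symm

lemma Equiv.swap_preimage_eq_self {α : Type*} [DecidableEq α] {a b : α} {s : Set α}
    (ha : a ∈ s) (hb : b ∈ s) : Equiv.swap a b ⁻¹' s = s := by
  ext x
  rw [Set.mem_preimage, Equiv.swap_apply_def]
  split_ifs with hxa hxb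
  · simp [hxa, ha, hb]
  · simp [hxb, ha, hb]
  · rfl

lemma pathOn_zero : pathOn 0 = ⊥ := by
  ext i j
  simp only [pathOn, bot_adj, iff_false]
  omega

section PathOn

variable {n : ℕ} {s : Set ℕ}

lemma subset_Icc_of_connected_induce_pathOn (h : ((pathOn n).induce s).Connected)
    (hs : s.Nontrivial) : s ⊆ Set.Icc 1 n := by
  intro v hv
  obtain ⟨w, hw, hwv⟩ := hs.exists_ne v
  obtain ⟨u, hu⟩ := (h.preconnected ⟨v, hv⟩ ⟨w, hw⟩).nonempty_neighborSet_left
    (Subtype.coe_ne_coe.mp hwv.symm)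
  exact ⟨hu.2.1, hu.2.2.1⟩

lemma forall_lt_or_forall_gt_of_connected_induce_pathOn (h : ((pathOn n).induce s).Connected)
    {c : ℕ} (hc : c ∉ s) : (∀ x ∈ s, x < c) ∨ (∀ x ∈ s, c < x) := by
  by_contra! ⟨⟨a, ha, hca⟩, ⟨b, hb, hbc⟩⟩
  obtain ⟨p⟩ := h.preconnected ⟨b, hb⟩ ⟨a, ha⟩
  obtain ⟨d, -, hlt, hge⟩ := p.exists_boundary_dart {x | x.1 < c}
    (lt_of_le_of_ne hbc (ne_of_mem_of_not_mem hb hc)) (not_lt.mpr hca)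
  have hstep : (d.snd : ℕ) = d.fst + 1 ∨ (d.fst : ℕ) = d.snd + 1 := d.adj.1
  have hne : (d.snd : ℕ) ≠ c := ne_of_mem_of_not_mem d.snd.2 hc
  simp only [Set.mem_ofPred_eq, not_lt] at hlt hge
  omega

lemma ncard_le_of_connected_induce_pathOn (h : ((pathOn n).induce s).Connected)
    (hs : s.Nontrivial) {c : ℕ} (hc : c ∉ s) : s.ncard ≤ max (c - 1) (n - c) := by
  have hsub := subset_Icc_of_connected_induce_pathOn h hs
  rcases forall_lt_or_forall_gt_of_connected_induce_pathOn h hc with hlt | hgt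
  · have : s ⊆ Set.Icc 1 (c - 1) := fun x hx => ⟨(hsub hx).1, by have := hlt x hx; omega⟩
    calc s.ncard ≤ (Set.Icc 1 (c - 1)).ncard := Set.ncard_le_ncard this
      _ ≤ _ := by simp
  · have : s ⊆ Set.Icc (c + 1) n := fun x hx => ⟨hgt x hx, (hsub hx).2⟩
    calc s.ncard ≤ (Set.Icc (c + 1) n).ncard := Set.ncard_le_ncard this
      _ ≤ _ := by simp

lemma middle_mem_of_connected_induce_pathOn (hn : Even n) (hn0 : 0 < n)
    (h : ((pathOn n).induce s).Connected) (hs : n / 2 + 1 ≤ s.ncard) :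
    n / 2 ∈ s ∧ n / 2 + 1 ∈ s := by
  obtain ⟨m, rfl⟩ := hn
  have hnt : s.Nontrivial := (Set.one_lt_ncard_iff_nontrivial_and_finite.mp (by omega)).1
  constructor <;> by_contra hc <;> have := ncard_le_of_connected_induce_pathOn h hnt hc <;> omega

end PathOn

theorem stmt16 (n : ℕ) (hn : Even n) (k : ℕ) (hk : n / 2 + 1 ≤ k)
    (S : Finset ℕ) (hS : S.card = k) :
    ((pathOn n).induce (S : Set ℕ)).Connected ↔
      (((pathOn n).map (Equiv.swap (n / 2) (n / 2 + 1)).toEmbedding).induce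
        (S : Set ℕ)).Connected := by
  rcases n.eq_zero_or_pos with rfl | hn0
  · rw [pathOn_zero, map_bot]
  have hSk : (S : Set ℕ).ncard = k := by rw [Set.ncard_coe_finset, hS]
  have hSpre : (Equiv.swap (n / 2) (n / 2 + 1) ⁻¹' S).ncard = k := by
    rw [Set.ncard_preimage_of_injective_subset_range (Equiv.injective _) (by simp), hSk]
  rw [connected_induce_map_equiv_iff]
  constructor
  · intro h
    obtain ⟨h₁, h₂⟩ := middle_mem_of_connected_induce_pathOn hn hn0 h (hSk ▸ hk)
    rwa [Equiv.swap_preimage_eq_self h₁ h₂]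
  · intro h
    obtain ⟨h₁, h₂⟩ := middle_mem_of_connected_induce_pathOn hn hn0 h (hSpre ▸ hk)
    rw [Set.mem_preimage, Equiv.swap_apply_left] at h₁
    rw [Set.mem_preimage, Equiv.swap_apply_right] at h₂
    rwa [Equiv.swap_preimage_eq_self h₂ h₁] at h
end

section
/- Let g ≥ 3 and let G be a graph with no cycle of length at most g (girth greater than g). Let A be a set of g+1 vertices of G. Then G[A] is a cycle of length g+1 if and only if G[A \ {a}] is connected for every a ∈ A. -/
/-!
Both sides say that `G[A]` is a Hamiltonian cycle. A connected graph of minimum degree two on `A`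
contains a cycle; it has at most `g + 1` vertices and, by the girth bound, at least `g + 1`, so it
passes through all of `A`. Being a shortest cycle of `G`, it has no chord, so every vertex has
exactly two neighbours in `A`, and deleting one vertex leaves a path. Conversely, if every
`G[A \ {a}]` is connected, each vertex has two neighbours in `A` (deleting one neighbour of `a`
leaves `a` another one) and `G[A]` is connected, so the same Hamiltonian cycle exists.
-/

open SimpleGraph Finset

namespace SimpleGraph

section Finite

variable {W : Type*} [Fintype W] {H : SimpleGraph W}

lemma Connected.exists_isCycle_of_forall_two_le_degree [DecidableRel H.Adj] (hconn : H.Connected)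
    (hdeg : ∀ v, 2 ≤ H.degree v) : ∃ (v : W) (c : H.Walk v v), c.IsCycle := by
  by_contra! hacyc
  obtain ⟨v⟩ := hconn.nonempty
  obtain ⟨w, hvw⟩ := (H.degree_pos_iff_exists_adj v).1 (by linarith [hdeg v])
  have : Nontrivial W := nontrivial_of_ne v w hvw.ne
  have htree : H.IsTree := ⟨hconn, hacyc⟩
  have := htree.minDegree_eq_one_of_nontrivial
  have := H.le_minDegree_of_forall_le_degree 2 hdeg
  omega

lemma Walk.IsCycle.length_le_card {v : W} {c : H.Walk v v} (hc : c.IsCycle) :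
    c.length ≤ Fintype.card W := by
  rw [← Walk.length_tail_add_one hc.not_nil]
  exact hc.isPath_tail.length_lt

end Finite

variable {V : Type*} {G : SimpleGraph V}

lemma egirth_le_length_add_one {u v : V} {p : G.Walk u v} (hp : p.IsPath) (h : G.Adj u v)
    (he : s(u, v) ∉ p.edges) : G.egirth ≤ p.length + 1 := by
  simpa using egirth_le_length ((Walk.cons_isCycle_iff p h.symm).2 ⟨hp, by rwa [Sym2.eq_swap]⟩)

lemma Walk.IsCycle.mem_edges_of_adj_of_length_le_egirth [DecidableEq V] {u : V}
    {c : G.Walk u u} (hc : c.IsCycle) (hmin : (c.length : ℕ∞) ≤ G.egirth) {x y : V}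
    (hx : x ∈ c.support) (hy : y ∈ c.support) (hxy : G.Adj x y) : s(x, y) ∈ c.edges := by
  rw [← (c.rotate_edges x hx).mem_iff]
  rw [← c.length_rotate x hx] at hmin
  replace hy := (c.mem_support_rotate_iff x hx).2 hy
  replace hc := hc.rotate hx
  generalize c.rotate x hx = c at *
  by_contra hne
  -- The chord `xy` closes each of the two arcs of `c` between `x` and `y` into a cycle.
  have hp₂ : (c.dropUntil y hy).IsPath :=
    Walk.IsCycle.isPath_of_append_right (Walk.not_nil_of_ne hxy.ne) (by rwa [c.take_spec hy])
  have h₁ := egirth_le_length_add_one (hc.isPath_takeUntil hy) hxy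
    (fun h => hne (c.edges_takeUntil_subset_edges hy h))
  have h₂ := egirth_le_length_add_one hp₂.reverse hxy
    (fun h => hne (c.edges_dropUntil_subset_edges hy (by simpa using h)))
  have hsplit := congrArg Walk.length (c.take_spec hy)
  rw [Walk.length_append] at hsplit
  rw [Walk.length_reverse] at h₂
  have := hmin.trans h₁
  have := hmin.trans h₂
  have := hc.three_le_length
  norm_cast at *
  omega

lemma Walk.IsCycle.connected_induce_support_diff_singleton [DecidableEq V] {u : V}
    {c : G.Walk u u} (hc : c.IsCycle) {a : V} (ha : a ∈ c.support) :
    (G.induce ({x | x ∈ c.support} \ {a})).Connected := by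
  have hrot : {x | x ∈ c.support} = {x | x ∈ (c.rotate a ha).support} := by simp
  rw [hrot]
  replace hc := hc.rotate ha
  generalize c.rotate a ha = c at *
  -- Dropping the two ends of the closed walk `c` at `a` leaves a walk through all other vertices.
  have htail : ¬c.tail.Nil := by
    rw [Walk.not_nil_iff_lt_length, Walk.length_tail]
    have := hc.three_le_length
    omega
  have hsupp := c.tail.support_dropLast_concat htail
  have hnodup := hsupp ▸ hc.isPath_tail.support_nodup
  have hset : {x | x ∈ c.support} \ {a} = {x | x ∈ c.tail.dropLast.support} := by
    ext x
    rw [List.nodup_append] at hnodup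
    simp only [Set.mem_sdiff, Set.mem_ofPred_eq, Set.mem_singleton_iff, ←
      c.cons_support_tail hc.not_nil, ← hsupp, List.mem_cons, List.mem_append]
    grind
  exact hset ▸ c.tail.dropLast.connected_induce_support

lemma degree_induce_coe_finset [DecidableEq V] [DecidableRel G.Adj] (A : Finset V)
    (v : (A : Set V)) : (G.induce (A : Set V)).degree v = #(A.filter (G.Adj v)) := by
  rw [← card_neighborFinset_eq_degree, ← card_map (Function.Embedding.subtype _)]
  congr 1
  ext x
  simp [and_comm]

lemma exists_isCycle_support_eq [DecidableEq V] [DecidableRel G.Adj] {A : Finset V}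
    (hconn : (G.induce (A : Set V)).Connected) (hdeg : ∀ a ∈ A, 2 ≤ #(A.filter (G.Adj a)))
    (hgirth : (#A : ℕ∞) ≤ G.egirth) :
    ∃ (v : V) (c : G.Walk v v),
      c.IsCycle ∧ c.length = #A ∧ ∀ x, x ∈ c.support ↔ x ∈ A := by
  obtain ⟨v, c, hc⟩ := hconn.exists_isCycle_of_forall_two_le_degree fun v => by
    rw [degree_induce_coe_finset]; exact hdeg v v.2
  let f := Embedding.induce (G := G) (A : Set V)
  have hcG : (c.map f.toHom).IsCycle := hc.map f.injective
  have hlen : c.length = #A := by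
    refine le_antisymm (by simpa using hc.length_le_card) ?_
    have := hgirth.trans (egirth_le_length hcG)
    rw [Walk.length_map] at this
    exact_mod_cast this
  have hham : c.IsHamiltonianCycle :=
    Walk.isHamiltonianCycle_iff_isCycle_and_length_eq.2 ⟨hc, by simpa using hlen⟩
  refine ⟨_, c.map f.toHom, hcG, by rw [Walk.length_map, hlen], fun x => ?_⟩
  simp only [Walk.support_map, List.mem_map]
  exact ⟨fun ⟨y, _, hy⟩ => hy ▸ y.2, fun hx => ⟨⟨x, hx⟩, hham.mem_support _, rfl⟩⟩

lemma Walk.IsCycle.card_filter_adj_eq_two [DecidableEq V] [DecidableRel G.Adj] {u : V}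
    {c : G.Walk u u} (hc : c.IsCycle) (hmin : (c.length : ℕ∞) ≤ G.egirth) {A : Finset V}
    (hA : ∀ x, x ∈ c.support ↔ x ∈ A) {a : V} (ha : a ∈ A) :
    #(A.filter (G.Adj a)) = 2 := by
  rw [← hc.ncard_neighborSet_toSubgraph_eq_two ((hA a).2 ha), ← Set.ncard_coe_finset]
  congr 1
  ext b
  simp only [coe_filter, Set.mem_ofPred_eq, Subgraph.mem_neighborSet,
    Walk.adj_toSubgraph_iff_mem_edges]
  refine ⟨fun ⟨hb, hab⟩ => ?_, fun h => ⟨(hA b).1 (c.snd_mem_support_of_mem_edges h),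
    c.adj_of_mem_edges h⟩⟩
  exact hc.mem_edges_of_adj_of_length_le_egirth hmin ((hA a).2 ha) ((hA b).2 hb) hab

lemma exists_adj_of_connected_induce {s : Set V} (hs : (G.induce s).Connected) {a z : V}
    (ha : a ∈ s) (hz : z ∈ s) (hne : a ≠ z) : ∃ b ∈ s, G.Adj a b := by
  obtain ⟨p⟩ := hs.preconnected ⟨a, ha⟩ ⟨z, hz⟩
  have hp : ¬p.Nil := Walk.not_nil_of_ne (by simpa using hne)
  exact ⟨p.snd, p.snd.2, by simpa using p.adj_snd hp⟩

lemma two_le_card_filter_adj_of_connected_induce_erase [DecidableEq V] [DecidableRel G.Adj]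
    {A : Finset V} (hA : 3 ≤ #A)
    (h : ∀ w ∈ A, (G.induce ((A.erase w : Finset V) : Set V)).Connected)
    {a : V} (ha : a ∈ A) : 2 ≤ #(A.filter (G.Adj a)) := by
  have exists_adj_ne : ∀ w ∈ A, w ≠ a → ∃ b ∈ A, b ≠ w ∧ G.Adj a b := by
    intro w hw hwa
    obtain ⟨z, hz⟩ : ((A.erase w).erase a).Nonempty := by
      rw [← card_pos, card_erase_of_mem (mem_erase.2 ⟨hwa.symm, ha⟩), card_erase_of_mem hw]
      omega
    obtain ⟨b, hb, hab⟩ := exists_adj_of_connected_induce (h w hw)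
      (by simpa using ⟨ha, hwa.symm⟩ : a ∈ ((A.erase w : Finset V) : Set V))
      (mem_of_mem_erase hz) (ne_of_mem_erase hz).symm
    simp only [coe_erase, Set.mem_sdiff, mem_coe, Set.mem_singleton_iff] at hb
    exact ⟨b, hb.1, hb.2, hab⟩
  obtain ⟨w, hw⟩ : (A.erase a).Nonempty := by
    rw [← card_pos, card_erase_of_mem ha]; omega
  obtain ⟨b₁, hb₁, -, hab₁⟩ := exists_adj_ne w (mem_of_mem_erase hw) (ne_of_mem_erase hw)
  obtain ⟨b₂, hb₂, hne, hab₂⟩ := exists_adj_ne b₁ hb₁ hab₁.ne'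
  exact one_lt_card.2
    ⟨b₂, mem_filter.2 ⟨hb₂, hab₂⟩, b₁, mem_filter.2 ⟨hb₁, hab₁⟩, hne⟩

lemma connected_induce_of_connected_induce_erase [DecidableEq V] {A : Finset V} {a b : V}
    (ha : a ∈ A) (hb : b ∈ A) (hab : G.Adj a b)
    (h : (G.induce ((A.erase a : Finset V) : Set V)).Connected) :
    (G.induce (A : Set V)).Connected := by
  have hA : (A : Set V) = ↑(A.erase a) ∪ {a, b} := by
    ext x
    simp only [coe_erase, Set.mem_union, Set.mem_sdiff, mem_coe, Set.mem_singleton_iff,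
      Set.mem_insert_iff]
    grind
  rw [hA]
  exact induce_union_connected h.preconnected (induce_pair_connected_of_adj hab).preconnected
    ⟨b, by simpa using ⟨hb, hab.ne'⟩, by simp⟩

end SimpleGraph

theorem stmt17 {V : Type*} [DecidableEq V] (G : SimpleGraph V) [DecidableRel G.Adj]
    (g : ℕ) (hg : 3 ≤ g) (hgirth : (g : ℕ∞) < G.egirth)
    (A : Finset V) (hA : A.card = g + 1) :
    ((G.induce (A : Set V)).Connected ∧
        ∀ a ∈ A, (A.filter (fun b => G.Adj a b)).card = 2) ↔
      ∀ a ∈ A, (G.induce ((A.erase a : Finset V) : Set V)).Connected := by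
  have hgirth' : (#A : ℕ∞) ≤ G.egirth := by
    rw [hA, Nat.cast_add_one]
    exact Order.add_one_le_of_lt hgirth
  constructor
  · rintro ⟨hconn, hdeg⟩ a ha
    obtain ⟨v, c, hc, -, hsupp⟩ :=
      exists_isCycle_support_eq hconn (fun a ha => (hdeg a ha).ge) hgirth'
    have hset : {x | x ∈ c.support} \ {a} = ((A.erase a : Finset V) : Set V) := by
      ext x
      simp [hsupp, and_comm]
    exact hset ▸ hc.connected_induce_support_diff_singleton ((hsupp a).2 ha)
  · intro h
    have hdeg : ∀ a ∈ A, 2 ≤ #(A.filter (G.Adj a)) := fun a ha =>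
      two_le_card_filter_adj_of_connected_induce_erase (by omega) h ha
    obtain ⟨a, ha⟩ : A.Nonempty := by rw [← card_pos]; omega
    obtain ⟨b, hb⟩ : (A.filter (G.Adj a)).Nonempty := by
      rw [← card_pos]; linarith [hdeg a ha]
    rw [mem_filter] at hb
    have hconn := connected_induce_of_connected_induce_erase ha hb.1 hb.2 (h a ha)
    obtain ⟨v, c, hc, hlen, hsupp⟩ := exists_isCycle_support_eq hconn hdeg hgirth'
    exact ⟨hconn, fun a ha => hc.card_filter_adj_eq_two (hlen ▸ hgirth') hsupp ha⟩
end
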